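/- Let θ_c = 2γ* where γ* is the unique zero of the digamma function Ψ on (0,∞). Then the function h_{θ_c} satisfies: h_{θ_c}'(1) = 0, h_{θ_c} is minimized at x = 1 among x ∈ (0,∞), h_{θ_c}(x) ≥ 0 for x ∈ (0,1], and h_{θ_c}(x) ≥ h_{θ_c}(1/2) > 0 for x ∈ (0, 1/2]. -/

import Mathlib

open Real Set

/-- The digamma function, defined by its series representation. -/
noncomputable def digamma (z : ℝ) : ℝ :=
  -Real.eulerMascheroniConstant + ∑' n : ℕ, (1 / ((n : ℝ) + 1) - 1 / ((n : ℝ) + z))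

/-- The function `g_θ(z) = (Σ_{n≥0} 1/(n+θ-z)²)/(Σ_{n≥0} 1/(n+z)²)`. -/
noncomputable def gFun (θ z : ℝ) : ℝ :=
  (∑' n : ℕ, 1 / ((n : ℝ) + θ - z) ^ 2) / (∑' n : ℕ, 1 / ((n : ℝ) + z) ^ 2)

/-- The function `h_θ(x) = x Ψ(u(x)) + Ψ(θ - u(x))` where `u = g_θ⁻¹`. -/
noncomputable def hTheta (θ : ℝ) (u : ℝ → ℝ) (x : ℝ) : ℝ :=
  x * digamma (u x) + digamma (θ - u x)

/-! Proof idea: for `x ≥ 0` the function `z ↦ x Ψ(z) + Ψ(θ - z)` is strictly concave on `(0, θ)`,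
with derivative `x Ψ'(z) - Ψ'(θ - z)`, which vanishes exactly where `g_θ(z) = x`. Hence
`h_θ(x) = max_{0<z<θ} (x Ψ(z) + Ψ(θ - z))`. For `θ = θ_c` the choice `z = γ*` gives the value `0`
for every `x`, so `h_{θ_c} ≥ 0 = h_{θ_c}(1)`, with strict inequality at `x = 1/2` since
`g_{θ_c}(γ*) = 1`. Comparing the values at `z = u(1/2)` for `x = 1` and `x = 1/2` gives
`Ψ(u(1/2)) < 0`, and then `h_{θ_c}(x) ≥ x Ψ(u(1/2)) + Ψ(θ_c - u(1/2)) ≥ h_{θ_c}(1/2)` for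
`x ≤ 1/2`. -/

noncomputable def trigamma (a : ℝ) : ℝ := ∑' n : ℕ, 1 / ((n : ℝ) + a) ^ 2

lemma summable_one_div_add_sq (a : ℝ) : Summable fun n : ℕ => 1 / ((n : ℝ) + a) ^ 2 := by
  have := (Real.summable_one_div_nat_add_rpow a 2).mpr one_lt_two
  simpa only [rpow_two, sq_abs] using this

lemma trigamma_pos {a : ℝ} (ha : 0 < a) : 0 < trigamma a :=
  (summable_one_div_add_sq a).tsum_pos (fun n => by positivity) 0 (by positivity)

lemma gFun_eq (θ z : ℝ) : gFun θ z = trigamma (θ - z) / trigamma z := by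
  simp only [gFun, trigamma, add_sub_assoc]

lemma summable_one_div_add_sub_one_div_add {a b : ℝ} (ha : 0 < a) (hb : 0 < b) :
    Summable fun n : ℕ => 1 / ((n : ℝ) + a) - 1 / ((n : ℝ) + b) := by
  have hprod : Summable fun n : ℕ => 1 / ((n : ℝ) + a) * (1 / ((n : ℝ) + b)) := by
    refine Summable.of_nonneg_of_le (fun n => by positivity) (fun n => ?_)
      ((summable_one_div_add_sq a).add (summable_one_div_add_sq b))
    rw [← one_div_pow, ← one_div_pow]
    nlinarith [sq_nonneg (1 / ((n : ℝ) + a) - 1 / ((n : ℝ) + b))]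
  refine (hprod.mul_left (b - a)).congr fun n => ?_
  have : (n : ℝ) + a ≠ 0 := by positivity
  have : (n : ℝ) + b ≠ 0 := by positivity
  field_simp
  ring

lemma digamma_sub_digamma {a b : ℝ} (ha : 0 < a) (hb : 0 < b) :
    digamma b - digamma a = ∑' n : ℕ, (1 / ((n : ℝ) + a) - 1 / ((n : ℝ) + b)) := by
  have hsa := summable_one_div_add_sub_one_div_add one_pos ha
  have hsb := summable_one_div_add_sub_one_div_add one_pos hb
  rw [digamma, digamma, add_sub_add_left_eq_sub, ← hsb.tsum_sub hsa]
  exact tsum_congr fun n => by ring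

lemma digamma_lt_add_mul_trigamma {a b : ℝ} (ha : 0 < a) (hb : 0 < b) (hab : a ≠ b) :
    digamma b < digamma a + (b - a) * trigamma a := by
  have hterm : ∀ n : ℕ, (b - a) * (1 / ((n : ℝ) + a) ^ 2) - (1 / ((n : ℝ) + a) - 1 / ((n : ℝ) + b))
      = (b - a) ^ 2 / (((n : ℝ) + a) ^ 2 * ((n : ℝ) + b)) := fun n => by
    have : (n : ℝ) + a ≠ 0 := by positivity
    have : (n : ℝ) + b ≠ 0 := by positivity
    field_simp
    ring
  have hA := (summable_one_div_add_sq a).mul_left (b - a)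
  have hD := summable_one_div_add_sub_one_div_add ha hb
  have hgap := (hA.sub hD).tsum_pos (fun n => by rw [hterm]; positivity) 0
    (by rw [hterm]; have := sub_ne_zero.mpr hab.symm; positivity)
  rw [hA.tsum_sub hD, tsum_mul_left, ← digamma_sub_digamma ha hb] at hgap
  rw [trigamma]
  linarith

lemma mul_digamma_add_digamma_sub_lt {θ x z w : ℝ} (hx : 0 ≤ x) (hz : z ∈ Ioo 0 θ)
    (hw : w ∈ Ioo 0 θ) (hzw : z ≠ w) (hgw : gFun θ w = x) :
    x * digamma z + digamma (θ - z) < x * digamma w + digamma (θ - w) := by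
  obtain ⟨hz0, hzθ⟩ := hz
  obtain ⟨hw0, hwθ⟩ := hw
  have hψz := digamma_lt_add_mul_trigamma hw0 hz0 hzw.symm
  have hψθz := digamma_lt_add_mul_trigamma (sub_pos.mpr hwθ) (sub_pos.mpr hzθ)
    (by contrapose! hzw; linarith)
  have hcrit : x * trigamma w = trigamma (θ - w) := by
    rw [← hgw, gFun_eq, div_mul_cancel₀ _ (trigamma_pos hw0).ne']
  have hxψz := mul_le_mul_of_nonneg_left hψz.le hx
  linear_combination hxψz + hψθz + (z - w) * hcrit

lemma le_hTheta {θ x z : ℝ} {u : ℝ → ℝ} (hu : ∀ x : ℝ, 0 < x → u x ∈ Ioo 0 θ ∧ gFun θ (u x) = x)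
    (hx : 0 < x) (hz : z ∈ Ioo 0 θ) : x * digamma z + digamma (θ - z) ≤ hTheta θ u x := by
  obtain ⟨hux, hgux⟩ := hu x hx
  rcases eq_or_ne z (u x) with rfl | hne
  · rfl
  · exact (mul_digamma_add_digamma_sub_lt hx.le hz hux hne hgux).le

/-- Let `θ_c = 2γ*` where `γ*` is the unique zero of the digamma function on `(0,∞)`,
and let `u = g_{θ_c}⁻¹`. Then `h_{θ_c}'(1) = Ψ(u(1)) = 0`, `h_{θ_c}` is minimized at
`x = 1` on `(0,∞)`, `h_{θ_c}(x) ≥ 0` on `(0,1]`, and `h_{θ_c}(x) ≥ h_{θ_c}(1/2) > 0`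
on `(0,1/2]`. -/
theorem hThetaCrit_min (γs : ℝ) (hγs : 0 < γs) (hzero : digamma γs = 0)
    (θc : ℝ) (hθc : θc = 2 * γs) (u : ℝ → ℝ)
    (hu : ∀ x : ℝ, 0 < x → u x ∈ Set.Ioo 0 θc ∧ gFun θc (u x) = x) :
    digamma (u 1) = 0 ∧
    (∀ x ∈ Set.Ioi (0 : ℝ), hTheta θc u 1 ≤ hTheta θc u x) ∧
    (∀ x ∈ Set.Ioc (0 : ℝ) 1, 0 ≤ hTheta θc u x) ∧
    0 < hTheta θc u (1 / 2) ∧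
    (∀ x ∈ Set.Ioc (0 : ℝ) (1 / 2), hTheta θc u (1 / 2) ≤ hTheta θc u x) := by
  have hγ : γs ∈ Ioo 0 θc := ⟨hγs, by linarith⟩
  have hθγ : θc - γs = γs := by linarith
  have hgγ : gFun θc γs = 1 := by rw [gFun_eq, hθγ, div_self (trigamma_pos hγs).ne']
  have hHγ (x : ℝ) : x * digamma γs + digamma (θc - γs) = 0 := by rw [hθγ, hzero]; ring
  have hnonneg (x : ℝ) (hx : 0 < x) : 0 ≤ hTheta θc u x := hHγ x ▸ le_hTheta hu hx hγ
  obtain ⟨hu1, hgu1⟩ := hu 1 one_pos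
  have hu1γ : u 1 = γs := by
    by_contra hne
    have := mul_digamma_add_digamma_sub_lt zero_le_one hγ hu1 (Ne.symm hne) hgu1
    have := mul_digamma_add_digamma_sub_lt zero_le_one hu1 hγ hne hgγ
    linarith
  have h1 : hTheta θc u 1 = 0 := by rw [hTheta, hu1γ, hHγ]
  obtain ⟨hw, hgw⟩ := hu (1 / 2) one_half_pos
  have hwγ : u (1 / 2) ≠ γs := fun h => by norm_num [h, hgγ] at hgw
  have hhalf : 0 < hTheta θc u (1 / 2) :=
    hHγ (1 / 2) ▸ mul_digamma_add_digamma_sub_lt one_half_pos.le hγ hw hwγ.symm hgw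
  have hψw : digamma (u (1 / 2)) < 0 := by
    have := mul_digamma_add_digamma_sub_lt zero_le_one hw hγ hwγ hgγ
    rw [hHγ] at this
    rw [hTheta] at hhalf
    linarith
  refine ⟨hu1γ ▸ hzero, fun x hx => h1 ▸ hnonneg x hx, fun x hx => hnonneg x hx.1, hhalf,
    fun x hx => ?_⟩
  have := le_hTheta hu hx.1 hw
  rw [hTheta]
  nlinarith [hx.2]
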